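/- Let k be a perfect field of characteristic p > 0 and V a k-vector space. Let σ act on V^{⊗p} by cyclic permutation of the tensor factors, and set d_− = id − σ and d_+ = id + σ + ⋯ + σ^{p−1} on V^{⊗p}. Then the map φ: V → V^{⊗p}, φ(v) = v⊗v⊗⋯⊗v, takes values in ker d_− ∩ ker d_+, and the induced maps V → ker d_−/im d_+ and V → ker d_+/im d_− are additive, satisfy φ(λv) = λ^p φ(v) for λ ∈ k, and are bijective; that is, φ induces an isomorphism of the Frobenius twist V^{(1)} with the Tate homology Ȟ_i(ℤ/pℤ, V^{⊗p}) in every (odd and even) degree i. -/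

import Mathlib

/-!
Fix a basis `(e_t)` of `V`. The tensors `e_f = e_{f 0} ⊗ ⋯ ⊗ e_{f (p-1)}`, `f : Fin p → ι`,
form a basis of `V^{⊗ p}` that `σ` permutes by cyclically shifting `f`. Since `p` is prime, a
non-constant `f` has a free orbit of length `p`, and on the span of a free orbit (a copy of
`k[ℤ/p]`) the Tate complex is exact in both degrees. Only the constant `f` survive: they are
fixed by `σ`, so `d₋` and `d₊ = p` vanish on them. Hence a class in either Tate group is
determined by its coefficients at the constant `f`, and that of `φ(v)` at the constant `t` is
`v_t ^ p`; as Frobenius is bijective on the perfect field `k`, `φ` induces both bijections.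
-/

open scoped TensorProduct
open PiTensorProduct

noncomputable section

variable (k : Type) [Field k] (p : ℕ) [CharP k p] [PerfectField k]
variable (V : Type) [AddCommGroup V] [Module k V]

/-- The `p`-th tensor power `V^{⊗ p}` over `k`. -/
abbrev TPow : Type := ⨂[k] (_ : Fin p), V

/-- The cyclic permutation `σ` of the tensor factors of `V^{⊗ p}`. -/
def sigma : TPow k p V →ₗ[k] TPow k p V :=
  (PiTensorProduct.reindex k (fun _ : Fin p => V) (finRotate p)).toLinearMap

/-- `d₋ = id − σ`. -/
def dMinus : TPow k p V →ₗ[k] TPow k p V := LinearMap.id - sigma k p V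

/-- `d₊ = id + σ + ⋯ + σ^{p−1}`. -/
def dPlus : TPow k p V →ₗ[k] TPow k p V :=
  ∑ i ∈ Finset.range p, (sigma k p V) ^ i

/-- The (non-additive) `p`-th power map `φ(v) = v ⊗ v ⊗ ⋯ ⊗ v`. -/
def phi (v : V) : TPow k p V := PiTensorProduct.tprod k (fun _ : Fin p => v)

end

open Finset Equiv Module

theorem geom_sum_mul_pow_of_pow_eq_one {A : Type*} [Ring A] {a : A} {n : ℕ} (h : a ^ n = 1)
    (m : ℕ) : (∑ i ∈ range n, a ^ i) * a ^ m = ∑ i ∈ range n, a ^ i := by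
  have hmul : (∑ i ∈ range n, a ^ i) * a = ∑ i ∈ range n, a ^ i := by
    have := geom_sum_mul a n
    rwa [h, sub_self, mul_sub, mul_one, sub_eq_zero] at this
  induction m with
  | zero => rw [pow_zero, mul_one]
  | succ m ih => rw [pow_succ, ← mul_assoc, ih, hmul]

namespace Finsupp

def lfilter (R : Type*) {α M : Type*} [Semiring R] [AddCommMonoid M] [Module R M]
    (P : α → Prop) [DecidablePred P] : (α →₀ M) →ₗ[R] α →₀ M where
  toFun := filter P
  map_add' _ _ := filter_add
  map_smul' _ _ := filter_smul

end Finsupp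

namespace Equiv.Perm

variable {X : Type*} {s : Perm X} {p : ℕ}

theorem SameCycle.exists_pow_eq_of_pow_eq_one [NeZero p] (hs : s ^ p = 1) {x g : X}
    (h : s.SameCycle x g) : ∃ i < p, (s ^ i) x = g := by
  obtain ⟨i, rfl⟩ := h
  have hp : (0 : ℤ) < p := by exact_mod_cast Nat.pos_of_neZero p
  have hnonneg := Int.emod_nonneg i hp.ne'
  refine ⟨(i % p).toNat, by have := Int.emod_lt_of_pos i hp; omega, ?_⟩
  rw [zpow_eq_zpow_emod' i hs, ← zpow_natCast, Int.toNat_of_nonneg hnonneg]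

theorem injOn_pow_apply_of_apply_ne [Fact p.Prime] (hs : s ^ p = 1) {x : X} (hx : s x ≠ x) :
    Set.InjOn (fun i : ℕ => (s ^ i) x) (Set.Iio p) := by
  have hper : Function.minimalPeriod s x = p :=
    Function.minimalPeriod_eq_prime (by simp [Function.IsPeriodicPt, Function.IsFixedPt,
      iterate_eq_pow, hs]) hx
  simpa [← hper, iterate_eq_pow] using Function.iterate_injOn_Iio_minimalPeriod (f := s) (x := x)

end Equiv.Perm

namespace Module.Basis

open scoped Classical

variable {R M X : Type*} [Ring R] [AddCommGroup M] [Module R M] (b : Basis X R M)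
  (s : Perm X)

noncomputable def restrictCycle (x : X) : M →ₗ[R] M :=
  b.repr.symm.toLinearMap ∘ₗ Finsupp.lfilter R (s.SameCycle x) ∘ₗ b.repr.toLinearMap

theorem repr_restrictCycle_apply (x g : X) (y : M) :
    b.repr (b.restrictCycle s x y) g = if s.SameCycle x g then b.repr y g else 0 := by
  simp [restrictCycle, Finsupp.lfilter, Finsupp.filter_apply]

theorem restrictCycle_apply_basis (x g : X) :
    b.restrictCycle s x (b g) = if s.SameCycle x g then b g else 0 := by
  refine b.repr.injective (Finsupp.ext fun g' => ?_)
  rw [repr_restrictCycle_apply, apply_ite b.repr]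
  by_cases hg : g = g'
  · subst hg; split_ifs <;> simp
  · split_ifs <;> simp [hg]

theorem restrictCycle_restrictCycle (x x' : X) (y : M) :
    b.restrictCycle s x' (b.restrictCycle s x y) =
      if s.SameCycle x' x then b.restrictCycle s x y else 0 := by
  refine b.repr.injective (Finsupp.ext fun g => ?_)
  rw [apply_ite b.repr, repr_restrictCycle_apply]
  by_cases hx : s.SameCycle x' x
  · by_cases hg : s.SameCycle x' g
    · simp [hx, hg]
    · have hxg : ¬s.SameCycle x g := fun h => hg (hx.trans h)
      simp [hx, hg, hxg, repr_restrictCycle_apply]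
  · by_cases hg : s.SameCycle x' g
    · have hxg : ¬s.SameCycle x g := fun h => hx (hg.trans h.symm)
      simp [hx, hg, hxg, repr_restrictCycle_apply]
    · simp [hx, hg]

theorem mem_of_forall_restrictCycle_mem {D : Submodule R M} {y : M}
    (h : ∀ x, b.restrictCycle s x y ∈ D) : y ∈ D := by
  obtain ⟨n, hn⟩ : ∃ n, (b.repr y).support.card ≤ n := ⟨_, le_rfl⟩
  induction n generalizing y with
  | zero =>
    rw [Nat.le_zero, Finset.card_eq_zero, Finsupp.support_eq_empty,
      LinearEquiv.map_eq_zero_iff] at hn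
    exact hn ▸ D.zero_mem
  | succ n ih =>
    by_cases hy : b.repr y = 0
    · exact (b.repr.map_eq_zero_iff.mp hy) ▸ D.zero_mem
    obtain ⟨x, hx⟩ := Finsupp.support_nonempty_iff.mpr hy
    rw [← sub_add_cancel y (b.restrictCycle s x y)]
    refine D.add_mem (ih (fun x' => ?_) ?_) (h x)
    · rw [map_sub, restrictCycle_restrictCycle]
      split_ifs
      exacts [D.sub_mem (h x') (h x), D.sub_mem (h x') D.zero_mem]
    · have hsub : (b.repr (y - b.restrictCycle s x y)).support ⊆ (b.repr y).support.erase x := by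
        intro g hg
        simp only [Finsupp.mem_support_iff, map_sub, Finsupp.sub_apply,
          repr_restrictCycle_apply] at hg
        split_ifs at hg with hxg
        · exact absurd (sub_self _) hg
        · exact Finset.mem_erase.mpr ⟨fun h => hxg (h ▸ .refl s x),
            Finsupp.mem_support_iff.mpr (by simpa using hg)⟩
      have := Finset.card_le_card hsub
      rw [Finset.card_erase_of_mem hx] at this
      omega

theorem restrictCycle_eq_zero_of_apply_eq_self {x : X} (hx : s x = x) {y : M}
    (hy : b.repr y x = 0) : b.restrictCycle s x y = 0 := by
  refine b.repr.injective (Finsupp.ext fun g => ?_)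
  rw [repr_restrictCycle_apply]
  split_ifs with hg
  · simp [← hg.eq_of_left hx, hy]
  · simp

variable {b s} {T : Module.End R M}

theorem pow_apply_basis (hT : ∀ x, T (b x) = b (s x)) (n : ℕ) (x : X) :
    (T ^ n) (b x) = b ((s ^ n) x) := by
  induction n with
  | zero => simp
  | succ n ih => rw [pow_succ', Module.End.mul_apply, ih, hT, pow_succ', Perm.mul_apply]

theorem repr_apply_of_apply_basis (hT : ∀ x, T (b x) = b (s x)) (y : M) (g : X) :
    b.repr (T y) g = b.repr y (s.symm g) := by
  have : (b.coord g).comp T = b.coord (s.symm g) := b.ext fun x => by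
    simp only [LinearMap.comp_apply, hT, coord_apply, repr_self, Finsupp.single_apply,
      eq_symm_apply]
  exact LinearMap.congr_fun this y

theorem commute_restrictCycle (hT : ∀ x, T (b x) = b (s x)) (x : X) :
    Commute T (b.restrictCycle s x) :=
  b.ext fun g => by
    simp only [Module.End.mul_apply, restrictCycle_apply_basis, hT, Perm.sameCycle_apply_right,
      apply_ite T, map_zero]

theorem repr_id_sub_apply_eq_zero (hT : ∀ x, T (b x) = b (s x)) {g : X} (hg : s g = g)
    (z : M) : b.repr ((LinearMap.id - T : M →ₗ[R] M) z) g = 0 := by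
  rw [LinearMap.sub_apply, map_sub, Finsupp.sub_apply, repr_apply_of_apply_basis hT,
    LinearMap.id_apply, s.symm_apply_eq.mpr hg.symm, sub_self]

theorem repr_geom_sum_apply_eq_zero {p : ℕ} [CharP R p] (hT : ∀ x, T (b x) = b (s x))
    {g : X} (hg : s g = g) (z : M) : b.repr ((∑ i ∈ range p, T ^ i) z) g = 0 := by
  have hfix (i : ℕ) : (s ^ i).symm g = g :=
    (s ^ i).symm_apply_eq.mpr (Perm.pow_apply_eq_self_of_apply_eq_self hg i).symm
  simp only [LinearMap.sum_apply, map_sum, Finsupp.coe_finsetSum, Finset.sum_apply,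
    repr_apply_of_apply_basis (pow_apply_basis hT _), hfix, sum_const, card_range, nsmul_eq_mul,
    CharP.cast_eq_zero, zero_mul]

variable {p : ℕ} [Fact p.Prime]

theorem repr_sum_smul_pow_apply (hs : s ^ p = 1) {x : X} (hx : s x ≠ x) (a : ℕ → R) {j : ℕ}
    (hj : j < p) : b.repr (∑ i ∈ range p, a i • b ((s ^ i) x)) ((s ^ j) x) = a j := by
  simp only [map_sum, map_smul, repr_self, Finsupp.coe_finsetSum, Finset.sum_apply,
    Finsupp.smul_apply, Finsupp.single_apply, smul_eq_mul]
  rw [Finset.sum_eq_single_of_mem j (mem_range.mpr hj)]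
  · simp
  · intro i hi hij
    rw [if_neg fun h => hij (Perm.injOn_pow_apply_of_apply_ne hs hx (mem_range.mp hi) hj h),
      mul_zero]

theorem restrictCycle_eq_sum (hs : s ^ p = 1) {x : X} (hx : s x ≠ x) (y : M) :
    b.restrictCycle s x y = ∑ i ∈ range p, b.repr y ((s ^ i) x) • b ((s ^ i) x) := by
  have : NeZero p := ⟨(Fact.out : p.Prime).ne_zero⟩
  refine b.repr.injective (Finsupp.ext fun g => ?_)
  rw [repr_restrictCycle_apply]
  split_ifs with hg
  · obtain ⟨j, hj, rfl⟩ := hg.exists_pow_eq_of_pow_eq_one hs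
    rw [repr_sum_smul_pow_apply hs hx _ hj]
  · rw [map_sum, Finsupp.finsetSum_apply]
    refine (Finset.sum_eq_zero fun i _ => ?_).symm
    have : (s ^ i) x ≠ g := fun h => hg (h ▸ Perm.sameCycle_pow_right.mpr (.refl s x))
    simp [this]

theorem restrictCycle_mem_range_geom_sum (hT : ∀ x, T (b x) = b (s x)) (hs : s ^ p = 1)
    {x : X} (hx : s x ≠ x) {y : M} (hy : T y = y) :
    b.restrictCycle s x y ∈ LinearMap.range (∑ i ∈ range p, T ^ i) := by
  have hconst (i : ℕ) : b.repr y ((s ^ i) x) = b.repr y x := by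
    have := repr_apply_of_apply_basis (pow_apply_basis hT i) y ((s ^ i) x)
    rwa [symm_apply_apply, Module.End.pow_apply, Function.iterate_fixed hy] at this
  refine ⟨b.repr y x • b x, ?_⟩
  rw [restrictCycle_eq_sum hs hx, LinearMap.sum_apply]
  exact sum_congr rfl fun i _ => by rw [map_smul, pow_apply_basis hT, hconst]

theorem restrictCycle_mem_range_id_sub (hT : ∀ x, T (b x) = b (s x)) (hs : s ^ p = 1)
    {x : X} (hx : s x ≠ x) {y : M} (hy : (∑ i ∈ range p, T ^ i) y = 0) :
    b.restrictCycle s x y ∈ LinearMap.range (LinearMap.id - T : M →ₗ[R] M) := by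
  set N := ∑ i ∈ range p, T ^ i
  set c : ℕ → R := fun i => b.repr y ((s ^ i) x)
  have hry : b.restrictCycle s x y = ∑ i ∈ range p, c i • (T ^ i) (b x) := by
    simp only [restrictCycle_eq_sum hs hx, pow_apply_basis hT, c]
  have hNT : ∀ i, N * T ^ i = N :=
    geom_sum_mul_pow_of_pow_eq_one (b.ext fun g => by rw [pow_apply_basis hT, hs]; rfl)
  -- `N` sends the cycle part `∑ cᵢ • Tⁱ e_x` to `(∑ cᵢ) • N e_x`
  have hc : ∑ i ∈ range p, c i = 0 := by
    have hNr : N (b.restrictCycle s x y) = 0 := by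
      rw [← Module.End.mul_apply, ((Commute.sum_left _ _ _ fun i _ =>
        (commute_restrictCycle hT x).pow_left i) : Commute N _).eq, Module.End.mul_apply, hy,
        map_zero]
    have hNbx : b.repr (N (b x)) x = 1 := by
      have h :=
        repr_sum_smul_pow_apply (b := b) hs hx (fun _ => (1 : R)) (Fact.out : p.Prime).pos
      rw [pow_zero, Perm.one_apply] at h
      simpa [N, pow_apply_basis hT] using h
    rw [hry, map_sum] at hNr
    simp only [map_smul, ← Module.End.mul_apply, hNT, ← sum_smul] at hNr
    simpa [hNbx] using congrArg (fun z => b.repr z x) hNr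
  have hG (i : ℕ) : (LinearMap.id - T : M →ₗ[R] M) ((∑ j ∈ range i, T ^ j) (b x)) =
      b x - (T ^ i) (b x) := by
    rw [← Module.End.mul_apply, ← Module.End.one_eq_id, mul_neg_geom_sum]; rfl
  -- as `∑ cᵢ = 0`, `∑ cᵢ • Tⁱ e_x = ∑ cᵢ • (Tⁱ - 1) e_x`, and `1 - Tⁱ = (1 - T)(1 + ⋯ + Tⁱ⁻¹)`
  refine ⟨-∑ i ∈ range p, c i • (∑ j ∈ range i, T ^ j) (b x), ?_⟩
  simp only [map_neg, map_sum, map_smul, hG, smul_sub, sum_sub_distrib, ← sum_smul, hc,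
    zero_smul, zero_sub, neg_neg, hry]

theorem mem_range_geom_sum_of_apply_eq_self (hT : ∀ x, T (b x) = b (s x)) (hs : s ^ p = 1)
    {y : M} (hy : T y = y) (hfix : ∀ g, s g = g → b.repr y g = 0) :
    y ∈ LinearMap.range (∑ i ∈ range p, T ^ i) :=
  b.mem_of_forall_restrictCycle_mem s fun x =>
    if hx : s x = x then b.restrictCycle_eq_zero_of_apply_eq_self s hx (hfix x hx) ▸ zero_mem _
    else restrictCycle_mem_range_geom_sum hT hs hx hy

theorem mem_range_id_sub_of_geom_sum_apply_eq_zero (hT : ∀ x, T (b x) = b (s x))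
    (hs : s ^ p = 1) {y : M} (hy : (∑ i ∈ range p, T ^ i) y = 0)
    (hfix : ∀ g, s g = g → b.repr y g = 0) :
    y ∈ LinearMap.range (LinearMap.id - T : M →ₗ[R] M) :=
  b.mem_of_forall_restrictCycle_mem s fun x =>
    if hx : s x = x then b.restrictCycle_eq_zero_of_apply_eq_self s hx (hfix x hx) ▸ zero_mem _
    else restrictCycle_mem_range_id_sub hT hs hx hy

end Module.Basis

theorem finRotate_pow_self (n : ℕ) : finRotate n ^ n = 1 := by
  rcases n with _ | _ | n
  · rfl
  · rw [finRotate_one]; rfl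
  · have h : orderOf (finRotate (n + 2)) = n + 2 := by
      rw [isCycle_finRotate.orderOf, support_finRotate, card_univ, Fintype.card_fin]
    exact orderOf_dvd_iff_pow_eq_one.mp h.dvd

/-- Defined through `arrowAction`, so that `cyclicShift_pow_self` is an instance of `map_pow`. -/
def cyclicShift (ι : Type*) (n : ℕ) : Perm (Fin n → ι) :=
  letI := arrowAction (G := Perm (Fin n)) (A := Fin n) (B := ι)
  MulAction.toPermHom _ _ (finRotate n)

theorem cyclicShift_apply {ι : Type*} {n : ℕ} (f : Fin n → ι) :
    cyclicShift ι n f = f ∘ (finRotate n).symm := rfl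

theorem cyclicShift_pow_self (ι : Type*) (n : ℕ) : cyclicShift ι n ^ n = 1 := by
  rw [cyclicShift, ← map_pow, finRotate_pow_self, map_one]

theorem eq_const_of_cyclicShift_eq_self {ι : Type*} {n : ℕ} [NeZero n] {g : Fin n → ι}
    (hg : cyclicShift ι n g = g) : g = Function.const _ (g 0) := by
  obtain ⟨m, rfl⟩ := Nat.exists_eq_add_one_of_ne_zero (NeZero.ne n)
  have hrot (i : Fin (m + 1)) : g (finRotate _ i) = g i := by
    conv_lhs => rw [← hg]
    simp [cyclicShift_apply]
  funext j
  induction j using Fin.induction with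
  | zero => rfl
  | succ j ih => rw [← Fin.coeSucc_eq_succ, ← finRotate_apply, hrot, ih]; rfl

section TensorPower

variable (k : Type) [Field k] (p : ℕ) (V : Type) [AddCommGroup V] [Module k V]

noncomputable def tpowBasis : Basis (Fin p → Basis.ofVectorSpaceIndex k V) k (TPow k p V) :=
  Basis.piTensorProduct fun _ => Basis.ofVectorSpace k V

theorem sigma_tpowBasis (f : Fin p → Basis.ofVectorSpaceIndex k V) :
    sigma k p V (tpowBasis k p V f) = tpowBasis k p V (cyclicShift _ p f) := by
  simp [tpowBasis, sigma, cyclicShift_apply]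

theorem sigma_phi (v : V) : sigma k p V (phi k p V v) = phi k p V v := by
  rw [phi, sigma, LinearEquiv.coe_coe, PiTensorProduct.reindex_tprod]

theorem dMinus_phi (v : V) : dMinus k p V (phi k p V v) = 0 := by
  rw [dMinus, LinearMap.sub_apply, LinearMap.id_apply, sigma_phi, sub_self]

theorem dPlus_phi [CharP k p] (v : V) : dPlus k p V (phi k p V v) = 0 := by
  simp only [dPlus, LinearMap.sum_apply, Module.End.pow_apply,
    Function.iterate_fixed (sigma_phi k p V v), sum_const, card_range,
    ← Nat.cast_smul_eq_nsmul k, CharP.cast_eq_zero, zero_smul]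

theorem phi_smul (c : k) (v : V) : phi k p V (c • v) = c ^ p • phi k p V v := by
  simpa [phi] using MultilinearMap.map_smul_univ (PiTensorProduct.tprod k) (fun _ => c)
    (fun _ : Fin p => v)

theorem tpowBasis_repr_phi_const (v : V) (t : Basis.ofVectorSpaceIndex k V) :
    (tpowBasis k p V).repr (phi k p V v) (Function.const _ t) =
      (Basis.ofVectorSpace k V).repr v t ^ p := by
  simp [tpowBasis, phi]

theorem tpowBasis_repr_const_eq_zero_of_mem_range_dPlus [CharP k p] {y : TPow k p V}
    (hy : y ∈ LinearMap.range (dPlus k p V)) (t : Basis.ofVectorSpaceIndex k V) :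
    (tpowBasis k p V).repr y (Function.const _ t) = 0 := by
  obtain ⟨z, rfl⟩ := hy
  exact Basis.repr_geom_sum_apply_eq_zero (sigma_tpowBasis k p V) rfl z

theorem tpowBasis_repr_const_eq_zero_of_mem_range_dMinus {y : TPow k p V}
    (hy : y ∈ LinearMap.range (dMinus k p V)) (t : Basis.ofVectorSpaceIndex k V) :
    (tpowBasis k p V).repr y (Function.const _ t) = 0 := by
  obtain ⟨z, rfl⟩ := hy
  exact Basis.repr_id_sub_apply_eq_zero (sigma_tpowBasis k p V) rfl z

variable [Fact p.Prime]

theorem mem_range_dPlus_of_dMinus_eq_zero {y : TPow k p V} (hy : dMinus k p V y = 0)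
    (h : ∀ t, (tpowBasis k p V).repr y (Function.const _ t) = 0) :
    y ∈ LinearMap.range (dPlus k p V) :=
  have : NeZero p := ⟨(Fact.out : p.Prime).ne_zero⟩
  Basis.mem_range_geom_sum_of_apply_eq_self (sigma_tpowBasis k p V) (cyclicShift_pow_self _ p)
    (sub_eq_zero.mp hy).symm fun g hg => by rw [eq_const_of_cyclicShift_eq_self hg]; exact h _

theorem mem_range_dMinus_of_dPlus_eq_zero {y : TPow k p V} (hy : dPlus k p V y = 0)
    (h : ∀ t, (tpowBasis k p V).repr y (Function.const _ t) = 0) :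
    y ∈ LinearMap.range (dMinus k p V) :=
  have : NeZero p := ⟨(Fact.out : p.Prime).ne_zero⟩
  Basis.mem_range_id_sub_of_geom_sum_apply_eq_zero (sigma_tpowBasis k p V)
    (cyclicShift_pow_self _ p) hy fun g hg => by rw [eq_const_of_cyclicShift_eq_self hg]; exact h _

theorem tpowBasis_repr_phi_add_sub_const [CharP k p] (v w : V)
    (t : Basis.ofVectorSpaceIndex k V) :
    (tpowBasis k p V).repr (phi k p V (v + w) - phi k p V v - phi k p V w)
      (Function.const _ t) = 0 := by
  simp [tpowBasis_repr_phi_const, add_pow_char]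

theorem eq_of_tpowBasis_repr_phi_sub_phi_const [CharP k p] {v w : V}
    (h : ∀ t, (tpowBasis k p V).repr (phi k p V v - phi k p V w) (Function.const _ t) = 0) :
    v = w :=
  (Basis.ofVectorSpace k V).repr.injective <| Finsupp.ext fun t => frobenius_inj k p <| by
    simpa [sub_eq_zero, tpowBasis_repr_phi_const, frobenius_def] using h t

theorem exists_tpowBasis_repr_sub_phi_const [CharP k p] [PerfectField k] (x : TPow k p V) :
    ∃ v : V, ∀ t, (tpowBasis k p V).repr (x - phi k p V v) (Function.const _ t) = 0 := by
  have : Nonempty (Fin p) := ⟨⟨0, (Fact.out : p.Prime).pos⟩⟩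
  have hconst : Function.Injective (Function.const (Fin p) (α := Basis.ofVectorSpaceIndex k V)) :=
    Function.const_injective
  refine ⟨(Basis.ofVectorSpace k V).repr.symm
    (((tpowBasis k p V).repr x).comapDomain _ hconst.injOn |>.mapRange
      (frobeniusEquiv k p).symm (map_zero _)), fun t => ?_⟩
  rw [map_sub, Finsupp.sub_apply, tpowBasis_repr_phi_const, LinearEquiv.apply_symm_apply,
    Finsupp.mapRange_apply, Finsupp.comapDomain_apply, frobeniusEquiv_symm_pow_p, sub_self]

end TensorPower


section

variable (k : Type) [Field k] (p : ℕ) [CharP k p] [PerfectField k]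
variable (V : Type) [AddCommGroup V] [Module k V]

/-- STATEMENT 9: `φ` lands in `ker d₋ ∩ ker d₊`, is additive and Frobenius-semilinear
modulo `im d₊` (resp. `im d₋`), and induces bijections
`V^{(1)} → ker d₋ / im d₊` and `V^{(1)} → ker d₊ / im d₋`,
i.e. isomorphisms onto the Tate homology of `ℤ/pℤ` acting on `V^{⊗ p}`
in all (even and odd) degrees. -/
theorem phi_induces_tate_isomorphism (hp : p ≠ 0) :
    -- φ lands in ker d₋ ∩ ker d₊
    (∀ v : V, dMinus k p V (phi k p V v) = 0 ∧ dPlus k p V (phi k p V v) = 0)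
    -- semilinearity: φ(λ v) = λ^p φ(v) (exactly, hence also modulo the images)
    ∧ (∀ (c : k) (v : V), phi k p V (c • v) = c ^ p • phi k p V v)
    -- additivity modulo im d₊ and modulo im d₋
    ∧ (∀ v w : V,
        phi k p V (v + w) - phi k p V v - phi k p V w ∈ LinearMap.range (dPlus k p V)
        ∧ phi k p V (v + w) - phi k p V v - phi k p V w ∈ LinearMap.range (dMinus k p V))
    -- the induced map to the even Tate homology ker d₋ / im d₊ is bijective
    ∧ (∀ v w : V, phi k p V v - phi k p V w ∈ LinearMap.range (dPlus k p V) → v = w)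
    ∧ (∀ x ∈ LinearMap.ker (dMinus k p V),
        ∃ v : V, x - phi k p V v ∈ LinearMap.range (dPlus k p V))
    -- the induced map to the odd Tate homology ker d₊ / im d₋ is bijective
    ∧ (∀ v w : V, phi k p V v - phi k p V w ∈ LinearMap.range (dMinus k p V) → v = w)
    ∧ (∀ x ∈ LinearMap.ker (dPlus k p V),
        ∃ v : V, x - phi k p V v ∈ LinearMap.range (dMinus k p V)) := by
  have : Fact p.Prime := ⟨(CharP.char_is_prime_or_zero k p).resolve_right hp⟩
  refine ⟨fun v => ⟨dMinus_phi k p V v, dPlus_phi k p V v⟩, phi_smul k p V,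
    fun v w => ⟨?_, ?_⟩, fun v w h => ?_, fun x hx => ?_, fun v w h => ?_, fun x hx => ?_⟩
  · exact mem_range_dPlus_of_dMinus_eq_zero k p V (by simp [dMinus_phi])
      (tpowBasis_repr_phi_add_sub_const k p V v w)
  · exact mem_range_dMinus_of_dPlus_eq_zero k p V (by simp [dPlus_phi])
      (tpowBasis_repr_phi_add_sub_const k p V v w)
  · exact eq_of_tpowBasis_repr_phi_sub_phi_const k p V
      (tpowBasis_repr_const_eq_zero_of_mem_range_dPlus k p V h)
  · obtain ⟨v, hv⟩ := exists_tpowBasis_repr_sub_phi_const k p V x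
    exact ⟨v, mem_range_dPlus_of_dMinus_eq_zero k p V
      (by simpa [dMinus_phi] using LinearMap.mem_ker.mp hx) hv⟩
  · exact eq_of_tpowBasis_repr_phi_sub_phi_const k p V
      (tpowBasis_repr_const_eq_zero_of_mem_range_dMinus k p V h)
  · obtain ⟨v, hv⟩ := exists_tpowBasis_repr_sub_phi_const k p V x
    exact ⟨v, mem_range_dMinus_of_dPlus_eq_zero k p V
      (by simpa [dPlus_phi] using LinearMap.mem_ker.mp hx) hv⟩

end
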